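/- arXiv:2603.23461 — 4 statements merged into one kernel-verified Lean document; each statement's English description precedes it below -/
import Mathlib

section
/- Let P be an arbitrary probability distribution over R^d and let u_1, ..., u_{n+1} be i.i.d. random vectors drawn from P. Then the probability that u_{n+1} does not lie in the linear span of u_1, ..., u_n is at most d/(n+1). -/
/-!
Call an index `k` essential for `u` if `u k` is not in the span of the other vectors. The
essential vectors are linearly independent, so at most `d` indices are essential. The sample
is exchangeable, so each index is essential with the same probability `p`, and summing over
the `n + 1` indices gives `(n + 1) p ≤ d`. The event in the theorem is that the last index is
essential.
-/

open MeasureTheory Module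

section Span

variable (K : Type*) {V ι : Type*} [DivisionRing K] [AddCommGroup V] [Module K V]

def essentialIndices (u : ι → V) : Set ι := {k | u k ∉ Submodule.span K (u '' {k}ᶜ)}

theorem essentialIndices_comp_perm (u : ι → V) (σ : Equiv.Perm ι) :
    essentialIndices K (u ∘ σ) = σ ⁻¹' essentialIndices K u := by
  ext k
  change u (σ k) ∉ Submodule.span K ((u ∘ σ) '' {k}ᶜ) ↔
    u (σ k) ∉ Submodule.span K (u '' {σ k}ᶜ)
  rw [Set.image_comp, Set.image_compl_eq σ.bijective, Set.image_singleton]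

theorem linearIndependent_essentialIndices (u : ι → V) :
    LinearIndependent K fun k : essentialIndices K u => u k := by
  rw [linearIndependent_iff_notMem_span]
  rintro ⟨i, hi⟩ hspan
  refine hi (Submodule.span_mono ?_ hspan)
  rintro _ ⟨⟨k, _⟩, ⟨-, hki⟩, rfl⟩
  exact ⟨k, fun h => hki (Subtype.ext h), rfl⟩

theorem ncard_essentialIndices_le_finrank [Finite ι] [FiniteDimensional K V] (u : ι → V) :
    (essentialIndices K u).ncard ≤ finrank K V := by
  have := Fintype.ofFinite (essentialIndices K u)
  rw [← Nat.card_coe_set_eq, Nat.card_eq_fintype_card]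
  exact (linearIndependent_essentialIndices K u).fintype_card_le_finrank

end Span

theorem IsSigmaCompact.measurableSet {X : Type*} [TopologicalSpace X] [T2Space X]
    [MeasurableSpace X] [OpensMeasurableSpace X] {s : Set X} (hs : IsSigmaCompact s) :
    MeasurableSet s := by
  obtain ⟨K, hK, rfl⟩ := hs
  exact .iUnion fun n => (hK n).isClosed.measurableSet

section Measurability

variable (𝕜 : Type*) {V ι : Type*} [NontriviallyNormedField 𝕜] [ProperSpace 𝕜]
  [NormedAddCommGroup V] [NormedSpace 𝕜 V] [FiniteDimensional 𝕜 V]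
  [MeasurableSpace V] [BorelSpace V] [Finite ι]

/-- The set is the continuous image of the σ-compact space `(ι → 𝕜) × (ι → V)` under
`(c, w) ↦ (∑ i, c i • w i, w)`. -/
theorem measurableSet_mem_span_range :
    MeasurableSet {p : V × (ι → V) | p.1 ∈ Submodule.span 𝕜 (Set.range p.2)} := by
  have := Fintype.ofFinite ι
  have : ProperSpace V := FiniteDimensional.proper 𝕜 V
  have hrange : {p : V × (ι → V) | p.1 ∈ Submodule.span 𝕜 (Set.range p.2)} =
      Set.range fun q : (ι → 𝕜) × (ι → V) => (∑ i, q.1 i • q.2 i, q.2) := by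
    ext ⟨v, w⟩
    simp [Submodule.mem_span_range_iff_exists_fun, eq_comm]
  rw [hrange]
  exact (isSigmaCompact_range (by fun_prop)).measurableSet

theorem measurableSet_mem_essentialIndices (k : ι) :
    MeasurableSet {u : ι → V | k ∈ essentialIndices 𝕜 u} := by
  have hpre : {u : ι → V | k ∈ essentialIndices 𝕜 u} =
      (fun u : ι → V => (u k, fun j : ({k}ᶜ : Set ι) => u j)) ⁻¹'
        {p | p.1 ∈ Submodule.span 𝕜 (Set.range p.2)}ᶜ := by
    ext u
    simp [essentialIndices, Set.image_eq_range]
  rw [hpre]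
  exact (measurableSet_mem_span_range 𝕜).compl.preimage (by fun_prop)

end Measurability

theorem Measure.pi_preimage_comp_perm {ι α : Type*} [Fintype ι] [MeasurableSpace α]
    (P : Measure α) [SigmaFinite P] (σ : Equiv.Perm ι) {S : Set (ι → α)}
    (hS : MeasurableSet S) :
    Measure.pi (fun _ : ι => P) ((· ∘ σ) ⁻¹' S) = Measure.pi (fun _ : ι => P) S := by
  have hcomp : ⇑(MeasurableEquiv.piCongrLeft (fun _ => α) σ.symm) = (· ∘ σ) := by
    ext u i
    simp [MeasurableEquiv.coe_piCongrLeft, Equiv.piCongrLeft_apply]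
  rw [← hcomp]
  exact (measurePreserving_piCongrLeft (fun _ : ι => P) σ.symm).measure_preimage
    hS.nullMeasurableSet

theorem sum_measure_le_of_ncard_le {Ω ι : Type*} [MeasurableSpace Ω] [Fintype ι]
    (μ : Measure Ω) {A : ι → Set Ω} (hA : ∀ k, MeasurableSet (A k)) {d : ℕ}
    (h : ∀ x, {k | x ∈ A k}.ncard ≤ d) :
    ∑ k, μ (A k) ≤ d * μ Set.univ := by
  classical
  have hcount (x : Ω) : ∑ k, (A k).indicator 1 x = ({k | x ∈ A k}.ncard : ENNReal) := by
    simp [Set.indicator_apply, Finset.sum_boole, Set.ncard_eq_toFinset_card']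
  calc ∑ k, μ (A k) = ∫⁻ x, ∑ k, (A k).indicator 1 x ∂μ := by
        rw [lintegral_finsetSum _ fun k _ => measurable_one.indicator (hA k)]
        simp only [lintegral_indicator_one (hA _)]
    _ ≤ ∫⁻ _, (d : ENNReal) ∂μ :=
        lintegral_mono fun x => by rw [hcount]; exact Nat.cast_le.mpr (h x)
    _ = d * μ Set.univ := lintegral_const _

theorem Fin.range_comp_castSucc {α : Type*} {n : ℕ} (u : Fin (n + 1) → α) :
    Set.range (fun i : Fin n => u i.castSucc) = u '' {Fin.last n}ᶜ := by
  rw [← Function.comp_def, Set.range_comp, Fin.range_castSucc]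
  congr 1
  ext i
  simp [← Fin.lt_last_iff_ne_last, Fin.lt_def]

/-- For i.i.d. samples `u 0, ..., u n` (that is, `n+1` samples) from an
arbitrary probability distribution `P` on `ℝ^d`, the probability that the last sample
does not lie in the linear span of the first `n` samples is at most `d / (n+1)`. -/
theorem stmt0 (d n : ℕ) (P : Measure (EuclideanSpace ℝ (Fin d)))
    [IsProbabilityMeasure P] :
    (Measure.pi fun _ : Fin (n + 1) => P)
      {u | u (Fin.last n) ∉
        Submodule.span ℝ (Set.range fun i : Fin n => u i.castSucc)}
      ≤ (d : ENNReal) / (n + 1) := by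
  set μ := Measure.pi fun _ : Fin (n + 1) => P
  set A : Fin (n + 1) → Set (Fin (n + 1) → EuclideanSpace ℝ (Fin d)) :=
    fun k => {u | k ∈ essentialIndices ℝ u}
  have hA (k : Fin (n + 1)) : MeasurableSet (A k) := measurableSet_mem_essentialIndices ℝ k
  have hevent : {u : Fin (n + 1) → EuclideanSpace ℝ (Fin d) | u (Fin.last n) ∉
      Submodule.span ℝ (Set.range fun i : Fin n => u i.castSucc)} = A (Fin.last n) := by
    simp only [A, essentialIndices, Fin.range_comp_castSucc, Set.mem_ofPred_eq]
  have hexch (k : Fin (n + 1)) : μ (A k) = μ (A (Fin.last n)) := by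
    have : A k = (· ∘ Equiv.swap (Fin.last n) k) ⁻¹' A (Fin.last n) := by
      ext u
      simp [A, essentialIndices_comp_perm]
    rw [this, Measure.pi_preimage_comp_perm P _ (hA _)]
  have hsum : ∑ k, μ (A k) ≤ d := by
    simpa [finrank_euclideanSpace_fin] using sum_measure_le_of_ncard_le μ hA
      fun u => ncard_essentialIndices_le_finrank ℝ u
  rw [hevent, ENNReal.le_div_iff_mul_le (by simp) (by simp), mul_comm]
  simpa [hexch] using hsum
end

section
/- Let u_1, u_2, ... be i.i.d. random vectors in R^d, let S ⊆ R^d be a linear subspace of dimension r ≥ 1, and let n ≥ 1 be an integer. Suppose that for every v ∈ S, the probability that v lies in Span(u_1, ..., u_n) is at least 1/2. Let k = ⌈log₂(r/δ)⌉ and m = k·n for δ ∈ (0,1). Then the probability that S ⊆ Span(u_1, ..., u_m) is at least 1 − δ. -/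
/-! Split `k * n` samples into `k` independent blocks of `n`. A vector outside the span of all
samples lies outside the span of every block, so this happens with probability at most `2⁻ᵏ`.
A union bound over a basis of `S` bounds the probability that `S` is not covered by
`r 2⁻ᵏ`, and `k = ⌈log₂ (r / δ)⌉` makes this at most `δ`. -/

open MeasureTheory

section Measurability

variable {E ι : Type*} [NormedAddCommGroup E] [NormedSpace ℝ E] [FiniteDimensional ℝ E] [Fintype ι]

lemma isSigmaCompact_setOf_mem_span (v : E) :
    IsSigmaCompact {u : ι → E | v ∈ Submodule.span ℝ (Set.range u)} := by
  have : {u : ι → E | v ∈ Submodule.span ℝ (Set.range u)} =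
      Prod.snd '' {p : (ι → ℝ) × (ι → E) | ∑ i, p.1 i • p.2 i = v} := by
    ext u
    simp [Submodule.mem_span_range_iff_exists_fun]
  rw [this]
  exact (isSigmaCompact_univ.of_isClosed_subset
    (isClosed_eq (by fun_prop) continuous_const) (Set.subset_univ _)).image continuous_snd

lemma measurableSet_setOf_mem_span [MeasurableSpace E] [BorelSpace E] (v : E) :
    MeasurableSet {u : ι → E | v ∈ Submodule.span ℝ (Set.range u)} := by
  obtain ⟨K, hK, hKu⟩ := isSigmaCompact_setOf_mem_span (ι := ι) v
  rw [← hKu]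
  exact MeasurableSet.iUnion fun n => (hK n).measurableSet

end Measurability

section SpanFailure

variable {R M : Type*} [Semiring R] [AddCommMonoid M] [Module R M] [MeasurableSpace M]

lemma measure_pi_notMem_span_add_le (P : Measure M) [SigmaFinite P] (v : M) (a b : ℕ) :
    Measure.pi (fun _ : Fin (a + b) => P) {u | v ∉ Submodule.span R (Set.range u)} ≤
      Measure.pi (fun _ : Fin a => P) {u | v ∉ Submodule.span R (Set.range u)} *
      Measure.pi (fun _ : Fin b => P) {u | v ∉ Submodule.span R (Set.range u)} := by
  let e : (Fin a → M) × (Fin b → M) ≃ᵐ (Fin (a + b) → M) :=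
    (MeasurableEquiv.sumPiEquivProdPi fun _ => M).symm.trans
      (MeasurableEquiv.piCongrLeft (fun _ => M) finSumFinEquiv)
  have he : MeasurePreserving e ((Measure.pi fun _ => P).prod (Measure.pi fun _ => P))
      (Measure.pi fun _ => P) :=
    (measurePreserving_piCongrLeft (fun _ => P) finSumFinEquiv).comp
      (measurePreserving_sumPiEquivProdPi_symm fun _ => P)
  have he_apply (x : Fin a → M) (y : Fin b → M) (i : Fin a ⊕ Fin b) :
      e (x, y) (finSumFinEquiv i) = Sum.elim x y i := by
    simp only [e, MeasurableEquiv.trans_apply, MeasurableEquiv.piCongrLeft_apply_apply]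
    cases i <;> rfl
  rw [← he.map_eq, e.map_apply, ← Measure.prod_prod]
  refine measure_mono fun ⟨x, y⟩ hxy => ⟨fun hx => hxy (Submodule.span_mono ?_ hx),
    fun hy => hxy (Submodule.span_mono ?_ hy)⟩
  · rintro _ ⟨i, rfl⟩
    exact ⟨_, he_apply x y (.inl i)⟩
  · rintro _ ⟨i, rfl⟩
    exact ⟨_, he_apply x y (.inr i)⟩

lemma measure_pi_notMem_span_mul_le (P : Measure M) [SigmaFinite P] (v : M) {n : ℕ}
    {p : ENNReal}
    (hp : Measure.pi (fun _ : Fin n => P) {u | v ∉ Submodule.span R (Set.range u)} ≤ p) (k : ℕ) :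
    Measure.pi (fun _ : Fin (k * n) => P) {u | v ∉ Submodule.span R (Set.range u)} ≤ p ^ k := by
  induction k with
  | zero =>
    have : IsEmpty (Fin (0 * n)) := by rw [zero_mul]; infer_instance
    rw [pow_zero, Measure.pi_of_empty]
    exact prob_le_one
  | succ k ih =>
    rw [Nat.succ_mul, pow_succ]
    exact (measure_pi_notMem_span_add_le P v _ _).trans (mul_le_mul' ih hp)

lemma measure_not_le_span_le_sum {ι κ : Type*} [Fintype ι] (μ : Measure (κ → M))
    {T : Submodule R M} {w : ι → M} (hT : T ≤ Submodule.span R (Set.range w)) :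
    μ {u | ¬ T ≤ Submodule.span R (Set.range u)} ≤
      ∑ i, μ {u | w i ∉ Submodule.span R (Set.range u)} := by
  refine (measure_mono fun u hu => ?_).trans (measure_iUnion_fintype_le μ _)
  by_contra! h
  simp only [Set.mem_iUnion, Set.mem_ofPred_eq, not_exists, not_not] at h
  exact hu (hT.trans (Submodule.span_le.2 (Set.range_subset_iff.2 h)))

end SpanFailure

lemma le_two_pow_ceil_logb (x : ℝ) : x ≤ 2 ^ ⌈Real.logb 2 x⌉₊ := by
  rcases le_or_gt x 0 with hx | hx
  · exact hx.trans (by positivity)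
  · rw [← Real.rpow_natCast]
    exact (Real.logb_le_iff_le_rpow one_lt_two hx).1 (Nat.le_ceil _)

lemma natCast_mul_half_pow_ceil_logb_le (r : ℕ) {δ : ℝ} (hδ : 0 < δ) :
    (r : ENNReal) * (1 / 2) ^ ⌈Real.logb 2 (r / δ)⌉₊ ≤ ENNReal.ofReal δ := by
  have h : (r : ℝ) ≤ δ * 2 ^ ⌈Real.logb 2 (r / δ)⌉₊ := by
    rw [← div_le_iff₀' hδ]
    exact le_two_pow_ceil_logb _
  rw [one_div, ← ENNReal.inv_pow, ← div_eq_mul_inv]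
  refine ENNReal.div_le_of_le_mul ?_
  rw [← ENNReal.ofReal_natCast, ← ENNReal.ofReal_ofNat 2, ← ENNReal.ofReal_pow (by norm_num),
    ← ENNReal.ofReal_mul hδ.le]
  exact ENNReal.ofReal_le_ofReal h

theorem stmt2_general (d n r : ℕ) (δ : ℝ) (hδ : δ ∈ Set.Ioo (0 : ℝ) 1)
    (P : Measure (EuclideanSpace ℝ (Fin d))) [IsProbabilityMeasure P]
    (S : Submodule ℝ (EuclideanSpace ℝ (Fin d))) (hS : Module.finrank ℝ S = r)
    (hyp : ∀ v ∈ S, (1 : ENNReal) / 2 ≤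
      (Measure.pi fun _ : Fin n => P) {u | v ∈ Submodule.span ℝ (Set.range u)}) :
    1 - ENNReal.ofReal δ ≤
      (Measure.pi fun _ : Fin (⌈Real.logb 2 (r / δ)⌉₊ * n) => P)
        {u | (S : Set (EuclideanSpace ℝ (Fin d))) ⊆
          (Submodule.span ℝ (Set.range u) : Submodule ℝ (EuclideanSpace ℝ (Fin d)))} := by
  set k := ⌈Real.logb 2 (r / δ)⌉₊
  let b : Module.Basis (Fin r) ℝ S := Module.finBasisOfFinrankEq ℝ S hS
  have hspan : S ≤ Submodule.span ℝ (Set.range fun i => (b i : EuclideanSpace ℝ (Fin d))) := by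
    rw [Set.range_comp', ← Submodule.coe_subtype, Submodule.span_image, b.span_eq,
      Submodule.map_top, Submodule.range_subtype]
  have hfail (i : Fin r) : Measure.pi (fun _ : Fin n => P)
      {u | (b i : EuclideanSpace ℝ (Fin d)) ∉ Submodule.span ℝ (Set.range u)} ≤ 1 / 2 := by
    rw [← Set.compl_ofPred, prob_compl_eq_one_sub (measurableSet_setOf_mem_span _),
      tsub_le_iff_right]
    calc (1 : ENNReal) = 1 / 2 + 1 / 2 := (ENNReal.add_halves 1).symm
      _ ≤ 1 / 2 + _ := by gcongr; exact hyp _ (b i).2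
  set μ := Measure.pi fun _ : Fin (k * n) => P
  have hbad : μ {u | ¬ S ≤ Submodule.span ℝ (Set.range u)} ≤ ENNReal.ofReal δ := calc
    _ ≤ ∑ i, μ {u | (b i : EuclideanSpace ℝ (Fin d)) ∉ Submodule.span ℝ (Set.range u)} :=
      measure_not_le_span_le_sum μ hspan
    _ ≤ ∑ _i : Fin r, (1 / 2 : ENNReal) ^ k :=
      Finset.sum_le_sum fun i _ => measure_pi_notMem_span_mul_le P _ (hfail i) k
    _ = r * (1 / 2) ^ k := by simp
    _ ≤ ENNReal.ofReal δ := natCast_mul_half_pow_ceil_logb_le r hδ.1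
  rw [tsub_le_iff_right, ← measure_univ (μ := μ)]
  exact (measure_univ_le_add_compl _).trans (by gcongr; exact hbad)

/-- Let `u_1, u_2, ...` be i.i.d. random vectors in `ℝ^d`, `S` a linear
subspace of dimension `r ≥ 1`, and `n ≥ 1`. If for every `v ∈ S` the probability that
`v` lies in the span of `n` i.i.d. samples is at least `1/2`, then with
`k = ⌈log₂ (r/δ)⌉` and `m = k * n`, the probability that `S` is contained in the span
of `m` i.i.d. samples is at least `1 - δ`. -/
theorem stmt2 (d n r : ℕ) (hr : 1 ≤ r) (hn : 1 ≤ n) (δ : ℝ) (hδ : δ ∈ Set.Ioo (0 : ℝ) 1)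
    (P : Measure (EuclideanSpace ℝ (Fin d))) [IsProbabilityMeasure P]
    (S : Submodule ℝ (EuclideanSpace ℝ (Fin d))) (hS : Module.finrank ℝ S = r)
    (hyp : ∀ v ∈ S, (1 : ENNReal) / 2 ≤
      (Measure.pi fun _ : Fin n => P) {u | v ∈ Submodule.span ℝ (Set.range u)}) :
    1 - ENNReal.ofReal δ ≤
      (Measure.pi fun _ : Fin (⌈Real.logb 2 (r / δ)⌉₊ * n) => P)
        {u | (S : Set (EuclideanSpace ℝ (Fin d))) ⊆
          (Submodule.span ℝ (Set.range u) : Submodule ℝ (EuclideanSpace ℝ (Fin d)))} :=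
  stmt2_general d n r δ hδ P S hS hyp
end

section
/- Let S ⊆ R^d be a linear subspace and x an R^d-valued random variable with p := P[x ∉ S] ≥ ε > 0. Let Q be the conditional law of x given x ∉ S, and fix u ∈ S^⊥. Suppose that for n i.i.d. samples y_1,...,y_n from Q, the probability that u lies in Span(y_1^⊥, ..., y_n^⊥) is at least 1 − δ, where y^⊥ denotes orthogonal projection onto S^⊥. Set m := ⌈n/ε + 2√(log(1/δ)·n)/ε + 4·log(1/δ)/ε⌉ and let x_1,...,x_m be i.i.d. copies of x. Then P[u ∈ Span(x_1^⊥, ..., x_m^⊥)] ≥ 1 − 2δ. -/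
/-!
Condition on the set `σ` of indices of the samples that fall outside `S`. Given `σ`, the samples
indexed by `σ` are i.i.d. with law `Q`; if `#σ ≥ n`, any `n` of them already have `u` in the span
of their projections with probability at least `1 - δ`, and the remaining samples only enlarge
that span. Hence `P[u ∈ span] ≥ P[#σ ≥ n] · (1 - δ)`. Since `#σ` is binomial with mean
`m p ≥ n + 2 √(n log (1/δ)) + 4 log (1/δ)`, the lower-tail Chernoff bound
`P[#σ < n] ≤ exp (-(m p - n)² / (2 m p)) ≤ δ` finishes the proof, as `(1 - δ)² ≥ 1 - 2δ`.
-/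

open MeasureTheory ProbabilityTheory Finset

lemma Real.log_le_half_sub_inv {t : ℝ} (ht : 1 ≤ t) : Real.log t ≤ (t - t⁻¹) / 2 := by
  rw [← Real.sinh_log (by positivity)]
  exact Real.self_le_sinh_iff.mpr (Real.log_nonneg ht)

lemma Fintype.sum_card_lt_pow_mul_pow_le (ι : Type*) [Fintype ι] {a b t : ℝ} (ha : 0 ≤ a)
    (hb : 0 ≤ b) (ht : 1 ≤ t) (n : ℕ) :
    ∑ σ : Finset ι with #σ < n, a ^ #σ * b ^ (Fintype.card ι - #σ)
      ≤ t ^ n * (a / t + b) ^ Fintype.card ι := by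
  rw [← Fintype.sum_pow_mul_eq_add_pow, Finset.mul_sum]
  refine (Finset.sum_le_sum fun σ hσ => ?_).trans
    (Finset.sum_le_sum_of_subset_of_nonneg (Finset.filter_subset _ _) fun σ _ _ => by positivity)
  calc a ^ #σ * b ^ (Fintype.card ι - #σ)
      = t ^ #σ * ((a / t) ^ #σ * b ^ (Fintype.card ι - #σ)) := by
        rw [div_pow, ← mul_assoc, mul_div_cancel₀ _ (by positivity)]
    _ ≤ t ^ n * ((a / t) ^ #σ * b ^ (Fintype.card ι - #σ)) :=
        mul_le_mul_of_nonneg_right (pow_le_pow_right₀ ht (Finset.mem_filter.mp hσ).2.le)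
          (by positivity)

lemma Fintype.sum_card_lt_pow_mul_one_sub_pow_le_exp (ι : Type*) [Fintype ι] {r : ℝ}
    (hr0 : 0 ≤ r) (hr1 : r ≤ 1) {n : ℕ} (hn : n ≤ Fintype.card ι * r) :
    ∑ σ : Finset ι with #σ < n, r ^ #σ * (1 - r) ^ (Fintype.card ι - #σ)
      ≤ Real.exp (-(Fintype.card ι * r - n) ^ 2 / (2 * (Fintype.card ι * r))) := by
  rcases n.eq_zero_or_pos with rfl | hn0
  · simpa using Real.exp_nonneg _
  set N := Fintype.card ι
  have hn0 : (0 : ℝ) < n := by exact_mod_cast hn0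
  have ha : 0 < N * r := hn0.trans_le hn
  -- exponential tilt by `t = N r / n`
  set t := N * r / n with ht_def
  have ht : 1 ≤ t := (one_le_div hn0).mpr hn
  calc _ ≤ t ^ n * (r / t + (1 - r)) ^ N :=
        Fintype.sum_card_lt_pow_mul_pow_le ι hr0 (by linarith) ht n
    _ ≤ Real.exp (n * Real.log t) * Real.exp (N * (r / t - r)) := by
        rw [Real.exp_nat_mul, Real.exp_log (by positivity), Real.exp_nat_mul]
        gcongr
        linarith [Real.add_one_le_exp (r / t - r)]
    _ ≤ Real.exp (n * ((t - t⁻¹) / 2)) * Real.exp (N * (r / t - r)) := by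
        gcongr
        exact Real.log_le_half_sub_inv ht
    _ = _ := by
        have hN : (N : ℝ) ≠ 0 := by rintro h; simp [h] at ha
        have hr : r ≠ 0 := by rintro rfl; simp at ha
        rw [← Real.exp_add, ht_def]
        congr 1
        field_simp
        ring

lemma le_sq_sub_div_of_add_two_sqrt_mul_add_le {L n a : ℝ} (hL : 0 ≤ L) (hn : 0 ≤ n)
    (h : n + 2 * √(L * n) + 4 * L ≤ a) : L ≤ (a - n) ^ 2 / (2 * a) := by
  have hc := Real.sq_sqrt (mul_nonneg hL hn)
  have hc0 := Real.sqrt_nonneg (L * n)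
  rcases (show 0 ≤ a by linarith).eq_or_lt with rfl | ha
  · rw [mul_zero, div_zero]; linarith
  rw [le_div_iff₀ (by positivity)]
  nlinarith

lemma measurableSet_setOf_mem_span_range {ι V W : Type*} [Fintype ι] [NormedAddCommGroup V]
    [NormedSpace ℝ V] [FiniteDimensional ℝ V] [MeasurableSpace V] [BorelSpace V]
    [NormedAddCommGroup W] [NormedSpace ℝ W] {f : V → W} (hf : Continuous f) (u : W) :
    MeasurableSet {y : ι → V | u ∈ Submodule.span ℝ (Set.range fun i => f (y i))} := by
  have hclosed : IsClosed {p : (ι → V) × (ι → ℝ) | ∑ i, p.2 i • f (p.1 i) = u} :=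
    isClosed_eq (by fun_prop) continuous_const
  obtain ⟨K, hK, hKU⟩ :=
    (isSigmaCompact_univ.of_isClosed_subset hclosed (Set.subset_univ _)).image continuous_fst
  have hset : {y : ι → V | u ∈ Submodule.span ℝ (Set.range fun i => f (y i))} =
      Prod.fst '' {p : (ι → V) × (ι → ℝ) | ∑ i, p.2 i • f (p.1 i) = u} := by
    ext y
    simp [Submodule.mem_span_range_iff_exists_fun]
  rw [hset, ← hKU]
  exact .iUnion fun k => (hK k).isClosed.measurableSet

lemma MeasureTheory.Measure.pi_map_comp_of_injective {ι κ E : Type*} [Fintype ι] [Fintype κ]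
    [MeasurableSpace E] (ν : ι → Measure E) [∀ i, IsFiniteMeasure (ν i)] (ρ : κ → Measure E)
    [∀ j, SigmaFinite (ρ j)] {e : κ → ι} (he : e.Injective)
    (hνρ : ∀ j, ν (e j) = ν (e j) Set.univ • ρ j) :
    (Measure.pi ν).map (fun x j => x (e j)) = Measure.pi ν Set.univ • Measure.pi ρ := by
  classical
  have hmeas : Measurable fun (x : ι → E) j => x (e j) := by fun_prop
  have hbox : ∀ s : κ → Set E, (∀ j, MeasurableSet (s j)) →
      (Measure.pi ν).map (fun x j => x (e j)) (Set.univ.pi s) =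
        (Measure.pi ν Set.univ • Measure.pi ρ) (Set.univ.pi s) := by
    intro s hs
    have hpre : (fun (x : ι → E) j => x (e j)) ⁻¹' Set.univ.pi s =
        Set.univ.pi (Function.extend e s fun _ => Set.univ) := by
      ext x
      simp only [Set.mem_preimage, Set.mem_univ_pi]
      refine ⟨fun h i => ?_, fun h j => by simpa [he.extend_apply] using h (e j)⟩
      by_cases hi : ∃ j, e j = i
      · obtain ⟨j, rfl⟩ := hi
        simpa [he.extend_apply] using h j
      · simp [Function.extend_apply' _ _ _ hi]
    rw [map_apply hmeas (.univ_pi hs), hpre, Measure.pi_pi, Measure.smul_apply, Measure.pi_pi,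
      Measure.pi_univ, smul_eq_mul, ← Finset.prod_mul_prod_compl (Finset.univ.image e),
      ← Finset.prod_mul_prod_compl (Finset.univ.image e) (fun i => ν i Set.univ),
      Finset.prod_image he.injOn, Finset.prod_image he.injOn]
    have hout : ∀ i ∈ (Finset.univ.image e)ᶜ,
        Function.extend e s (fun _ => Set.univ) i = Set.univ :=
      fun i hi => Function.extend_apply' _ _ _ fun ⟨j, hj⟩ => by simp [← hj] at hi
    rw [Finset.prod_congr rfl fun i hi => congrArg (ν i) (hout i hi), mul_right_comm,
      ← Finset.prod_mul_distrib]
    congr 1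
    refine Finset.prod_congr rfl fun j _ => ?_
    rw [he.extend_apply]
    nth_rw 1 [hνρ j]
    rfl
  refine ext_of_generate_finite _ generateFrom_pi.symm isPiSystem_pi ?_ ?_
  · rintro _ ⟨s, hs, rfl⟩
    exact hbox s fun j => hs j (Set.mem_univ j)
  · simpa using hbox (fun _ => Set.univ) fun _ => .univ

lemma ProbabilityTheory.measure_smul_cond {E : Type*} [MeasurableSpace E] (μ : Measure E)
    [IsFiniteMeasure μ] (s : Set E) : μ s • μ[|s] = μ.restrict s := by
  rcases eq_or_ne (μ s) 0 with hs | hs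
  · simp [hs, Measure.restrict_eq_zero.mpr hs]
  · rw [cond, smul_smul, ENNReal.mul_inv_cancel hs (measure_ne_top μ s), one_smul]

section HitIndices

variable {ι E : Type*} [Fintype ι]

open Classical in
noncomputable def hitIndices (T : Set E) (x : ι → E) : Finset ι :=
  univ.filter fun i => x i ∈ T

lemma mem_hitIndices {T : Set E} {x : ι → E} {i : ι} : i ∈ hitIndices T x ↔ x i ∈ T := by
  simp [hitIndices]

lemma setOf_hitIndices_eq [DecidableEq ι] (T : Set E) (σ : Finset ι) :
    {x : ι → E | hitIndices T x = σ} = Set.univ.pi fun i => if i ∈ σ then T else Tᶜ := by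
  ext x
  simp only [Set.mem_ofPred_eq, Finset.ext_iff, mem_hitIndices, Set.mem_univ_pi]
  refine forall_congr' fun i => ?_
  by_cases hi : i ∈ σ <;> simp [hi]

variable [MeasurableSpace E]

lemma measurableSet_setOf_hitIndices_eq {T : Set E} (hT : MeasurableSet T) (σ : Finset ι) :
    MeasurableSet {x : ι → E | hitIndices T x = σ} := by
  classical
  rw [setOf_hitIndices_eq]
  exact .univ_pi fun i => by split_ifs <;> simp [hT]

lemma measurableSet_setOf_hitIndices {T : Set E} (hT : MeasurableSet T) (p : Finset ι → Prop) :
    MeasurableSet {x : ι → E | p (hitIndices T x)} := by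
  have : {x : ι → E | p (hitIndices T x)} = ⋃ σ, ⋃ (_ : p σ), {x | hitIndices T x = σ} := by
    ext; simp
  rw [this]
  exact .iUnion fun σ => .iUnion fun _ => measurableSet_setOf_hitIndices_eq hT σ

lemma measure_setOf_hitIndices (P : Measure (ι → E)) {T : Set E} (hT : MeasurableSet T)
    (p : Finset ι → Prop) [DecidablePred p] :
    P {x | p (hitIndices T x)} = ∑ σ with p σ, P {x | hitIndices T x = σ} := by
  have : {x | p (hitIndices T x)} = hitIndices T ⁻¹' ↑(univ.filter p) := by
    ext; simp
  rw [this]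
  exact (sum_measure_preimage_singleton _ fun σ _ => measurableSet_setOf_hitIndices_eq hT σ).symm

lemma pi_setOf_hitIndices_eq (μ : Measure E) [IsFiniteMeasure μ] (T : Set E) (σ : Finset ι) :
    Measure.pi (fun _ => μ) {x : ι → E | hitIndices T x = σ}
      = μ T ^ #σ * μ Tᶜ ^ (Fintype.card ι - #σ) := by
  classical
  rw [setOf_hitIndices_eq, Measure.pi_pi]
  simp only [apply_ite (μ ·), Finset.prod_ite, Finset.prod_const]
  rw [Finset.filter_mem_eq_inter, Finset.univ_inter, Finset.filter_not, Finset.filter_mem_eq_inter,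
    Finset.univ_inter, Finset.card_sdiff_of_subset σ.subset_univ, Finset.card_univ]

lemma pi_setOf_hitIndices_eq_inter_preimage {κ : Type*} [Fintype κ] (μ : Measure E)
    [IsFiniteMeasure μ] (T : Set E) {σ : Finset ι} {e : κ → ι}
    (he : e.Injective) (heσ : ∀ j, e j ∈ σ) {A : Set (κ → E)} (hA : MeasurableSet A) :
    Measure.pi (fun _ => μ) ({x | hitIndices T x = σ} ∩ (fun x j => x (e j)) ⁻¹' A)
      = Measure.pi (fun _ => μ) {x | hitIndices T x = σ} * Measure.pi (fun _ => μ[|T]) A := by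
  classical
  have hmeas : Measurable fun (x : ι → E) j => x (e j) := by fun_prop
  have hrestrict : ∀ j, μ.restrict (if e j ∈ σ then T else Tᶜ)
      = μ.restrict (if e j ∈ σ then T else Tᶜ) Set.univ • μ[|T] := by
    simp [heσ, measure_smul_cond]
  rw [Set.inter_comm, ← Measure.restrict_apply (hmeas hA), setOf_hitIndices_eq,
    Measure.restrict_pi_pi, ← Measure.map_apply hmeas hA,
    Measure.pi_map_comp_of_injective _ _ he hrestrict, Measure.smul_apply, smul_eq_mul,
    ← Measure.restrict_pi_pi, Measure.restrict_apply_univ]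

lemma pi_card_le_card_hitIndices_mul_le {κ : Type*} [Fintype κ] (μ : Measure E)
    [IsFiniteMeasure μ] {T : Set E} (hT : MeasurableSet T) {A : Set (κ → E)}
    (hA : MeasurableSet A) (B : Set (ι → E))
    (hAB : ∀ (x : ι → E) (e : κ ↪ ι), (fun j => x (e j)) ∈ A → x ∈ B) :
    Measure.pi (fun _ : ι => μ) {x | Fintype.card κ ≤ #(hitIndices T x)}
        * Measure.pi (fun _ => μ[|T]) A ≤ Measure.pi (fun _ => μ) B := by
  calc _ = ∑ σ : Finset ι with Fintype.card κ ≤ #σ,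
        Measure.pi (fun _ => μ) {x | hitIndices T x = σ} * Measure.pi (fun _ => μ[|T]) A := by
        rw [measure_setOf_hitIndices _ hT (Fintype.card κ ≤ #·), Finset.sum_mul]
    _ ≤ ∑ σ : Finset ι with Fintype.card κ ≤ #σ,
        (Measure.pi (fun _ => μ)).restrict B {x | hitIndices T x = σ} := by
        refine Finset.sum_le_sum fun σ hσ => ?_
        obtain ⟨f⟩ : Nonempty (κ ↪ σ) :=
          Function.Embedding.nonempty_of_card_le (by simpa using (Finset.mem_filter.mp hσ).2)
        rw [← pi_setOf_hitIndices_eq_inter_preimage μ T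
          (f.trans (Function.Embedding.subtype (· ∈ σ))).injective (fun j => (f j).2) hA,
          Measure.restrict_apply (measurableSet_setOf_hitIndices_eq hT σ)]
        exact measure_mono (Set.inter_subset_inter_right _ fun x hx => hAB x _ hx)
    _ = (Measure.pi (fun _ => μ)).restrict B {x | Fintype.card κ ≤ #(hitIndices T x)} := by
        rw [measure_setOf_hitIndices _ hT (Fintype.card κ ≤ #·)]
    _ ≤ Measure.pi (fun _ => μ) B := by
        simpa using measure_mono (μ := (Measure.pi (fun _ => μ)).restrict B) (Set.subset_univ _)

lemma pi_card_hitIndices_lt_le (μ : Measure E) [IsProbabilityMeasure μ] {T : Set E}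
    (hT : MeasurableSet T) {n : ℕ} (hn : n ≤ Fintype.card ι * (μ T).toReal) :
    Measure.pi (fun _ => μ) {x : ι → E | #(hitIndices T x) < n}
      ≤ ENNReal.ofReal (Real.exp (-(Fintype.card ι * (μ T).toReal - n) ^ 2
          / (2 * (Fintype.card ι * (μ T).toReal)))) := by
  set r := (μ T).toReal
  have hr0 : 0 ≤ r := ENNReal.toReal_nonneg
  have hr1 : r ≤ 1 := ENNReal.toReal_le_of_le_ofReal zero_le_one (by simpa using prob_le_one)
  have hT' : μ T = ENNReal.ofReal r := (ENNReal.ofReal_toReal (measure_ne_top μ T)).symm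
  have hTc : μ Tᶜ = ENNReal.ofReal (1 - r) := by
    rw [prob_compl_eq_one_sub hT, hT', ← ENNReal.ofReal_one,
      ← ENNReal.ofReal_sub _ hr0]
  rw [measure_setOf_hitIndices _ hT (#· < n)]
  simp only [pi_setOf_hitIndices_eq, hT', hTc]
  simp_rw [← ENNReal.ofReal_pow hr0, ← ENNReal.ofReal_pow (sub_nonneg.mpr hr1),
    ← ENNReal.ofReal_mul (pow_nonneg hr0 _)]
  rw [← ENNReal.ofReal_sum_of_nonneg fun σ _ => by positivity]
  exact ENNReal.ofReal_le_ofReal (Fintype.sum_card_lt_pow_mul_one_sub_pow_le_exp ι hr0 hr1 hn)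

lemma one_sub_ofReal_exp_le_pi_le_card_hitIndices (μ : Measure E) [IsProbabilityMeasure μ]
    {T : Set E} (hT : MeasurableSet T) {n : ℕ} {L : ℝ} (hL : 0 ≤ L)
    (h : n + 2 * √(L * n) + 4 * L ≤ Fintype.card ι * (μ T).toReal) :
    1 - ENNReal.ofReal (Real.exp (-L))
      ≤ Measure.pi (fun _ => μ) {x : ι → E | n ≤ #(hitIndices T x)} := by
  have hfew : Measure.pi (fun _ => μ) {x : ι → E | #(hitIndices T x) < n}
      ≤ ENNReal.ofReal (Real.exp (-L)) := by
    refine (pi_card_hitIndices_lt_le μ hT (by linarith [Real.sqrt_nonneg (L * n)])).trans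
      (ENNReal.ofReal_le_ofReal (Real.exp_le_exp.mpr ?_))
    rw [neg_div]
    exact neg_le_neg (le_sq_sub_div_of_add_two_sqrt_mul_add_le hL n.cast_nonneg h)
  have hcompl : {x : ι → E | n ≤ #(hitIndices T x)} = {x | #(hitIndices T x) < n}ᶜ := by
    ext; simp
  rw [hcompl, prob_compl_eq_one_sub (measurableSet_setOf_hitIndices hT (#· < n))]
  exact tsub_le_tsub_left hfew 1

end HitIndices

lemma pi_card_le_card_hitIndices_mul_le_pi_mem_span {ι κ V W : Type*} [Fintype ι] [Fintype κ]
    [NormedAddCommGroup V] [NormedSpace ℝ V] [FiniteDimensional ℝ V] [MeasurableSpace V]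
    [BorelSpace V] [NormedAddCommGroup W] [NormedSpace ℝ W] (μ : Measure V) [IsFiniteMeasure μ]
    {T : Set V} (hT : MeasurableSet T) {f : V → W} (hf : Continuous f) (u : W) :
    Measure.pi (fun _ : ι => μ) {x | Fintype.card κ ≤ #(hitIndices T x)}
        * Measure.pi (fun _ : κ => μ[|T]) {y | u ∈ Submodule.span ℝ (Set.range fun j => f (y j))}
      ≤ Measure.pi (fun _ : ι => μ) {x | u ∈ Submodule.span ℝ (Set.range fun i => f (x i))} :=
  pi_card_le_card_hitIndices_mul_le μ hT (measurableSet_setOf_mem_span_range hf u) _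
    fun _ e hx => Submodule.span_mono (Set.range_comp_subset_range e _) hx

theorem stmt9_general (d n : ℕ) (ε δ : ℝ)
    (hε : ε ∈ Set.Ioo (0 : ℝ) 1) (hδ : δ ∈ Set.Ioo (0 : ℝ) 1)
    (μ : Measure (EuclideanSpace ℝ (Fin d))) [IsProbabilityMeasure μ]
    (S : Submodule ℝ (EuclideanSpace ℝ (Fin d)))
    (hp : ENNReal.ofReal ε ≤ μ ((S : Set (EuclideanSpace ℝ (Fin d)))ᶜ))
    (u : EuclideanSpace ℝ (Fin d))
    (hyp : 1 - ENNReal.ofReal δ ≤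
      (Measure.pi fun _ : Fin n => μ[|(S : Set (EuclideanSpace ℝ (Fin d)))ᶜ])
        {y | u ∈ Submodule.span ℝ
          (Set.range fun i => (Submodule.orthogonalProjectionOnto Sᗮ (y i) : EuclideanSpace ℝ (Fin d)))}) :
    1 - ENNReal.ofReal (2 * δ) ≤
      (Measure.pi fun _ :
          Fin (⌈n / ε + 2 * Real.sqrt (Real.log (1 / δ) * n) / ε
                + 4 * Real.log (1 / δ) / ε⌉₊) => μ)
        {x | u ∈ Submodule.span ℝ
          (Set.range fun i => (Submodule.orthogonalProjectionOnto Sᗮ (x i) : EuclideanSpace ℝ (Fin d)))} := by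
  obtain ⟨hε0, -⟩ := hε
  obtain ⟨hδ0, hδ1⟩ := hδ
  set L := Real.log (1 / δ)
  set m := ⌈n / ε + 2 * √(L * n) / ε + 4 * L / ε⌉₊
  set T := (S : Set (EuclideanSpace ℝ (Fin d)))ᶜ
  have hT : MeasurableSet T := S.closed_of_finiteDimensional.measurableSet.compl
  have hδL : Real.exp (-L) = δ := by
    rw [Real.exp_neg, Real.exp_log (by positivity), one_div, inv_inv]
  have hm : n + 2 * √(L * n) + 4 * L ≤ m * (μ T).toReal := by
    have hεT : ε ≤ (μ T).toReal := by
      simpa [hε0.le] using ENNReal.toReal_mono (measure_ne_top μ T) hp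
    calc (n : ℝ) + 2 * √(L * n) + 4 * L = (n / ε + 2 * √(L * n) / ε + 4 * L / ε) * ε := by
          field_simp
      _ ≤ _ := by gcongr; exact Nat.le_ceil _
  have hL : 0 ≤ L := Real.log_nonneg (by rw [le_div_iff₀ hδ0]; linarith)
  have hmany := one_sub_ofReal_exp_le_pi_le_card_hitIndices (ι := Fin m) μ hT hL
    (by rwa [Fintype.card_fin])
  have hproj : Continuous fun v => (Sᗮ.orthogonalProjectionOnto v : EuclideanSpace ℝ (Fin d)) := by
    fun_prop
  have hspan := pi_card_le_card_hitIndices_mul_le_pi_mem_span (ι := Fin m) (κ := Fin n) μ hT hproj u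
  rw [hδL] at hmany
  rw [Fintype.card_fin] at hspan
  calc 1 - ENNReal.ofReal (2 * δ) ≤ (1 - ENNReal.ofReal δ) * (1 - ENNReal.ofReal δ) := by
        rw [← ENNReal.ofReal_one, ← ENNReal.ofReal_sub _ hδ0.le,
          ← ENNReal.ofReal_sub _ (by positivity), ← ENNReal.ofReal_mul (by linarith)]
        exact ENNReal.ofReal_le_ofReal (by nlinarith)
    _ ≤ _ := (mul_le_mul' hmany hyp).trans hspan

/-- Boosting a conditional spanning guarantee by oversampling. Let `S` be a
linear subspace of `ℝ^d`, `x ~ μ` with `P[x ∉ S] ≥ ε`, `Q = Law(x | x ∉ S)`, and fix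
`u ∈ S^⊥`. If the probability that `u` lies in the span of the orthogonal projections
onto `S^⊥` of `n` i.i.d. `Q`-samples is at least `1 − δ`, then with
`m = ⌈n/ε + 2√(log(1/δ)·n)/ε + 4·log(1/δ)/ε⌉` i.i.d. copies of `x`, the probability
that `u` lies in the span of their projections is at least `1 − 2δ`. -/
theorem stmt9 (d n : ℕ) (hn : 0 < n) (ε δ : ℝ)
    (hε : ε ∈ Set.Ioo (0 : ℝ) 1) (hδ : δ ∈ Set.Ioo (0 : ℝ) 1)
    (μ : Measure (EuclideanSpace ℝ (Fin d))) [IsProbabilityMeasure μ]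
    (S : Submodule ℝ (EuclideanSpace ℝ (Fin d)))
    (hp : ENNReal.ofReal ε ≤ μ ((S : Set (EuclideanSpace ℝ (Fin d)))ᶜ))
    (u : EuclideanSpace ℝ (Fin d)) (hu : u ∈ Sᗮ)
    (hyp : 1 - ENNReal.ofReal δ ≤
      (Measure.pi fun _ : Fin n => μ[|(S : Set (EuclideanSpace ℝ (Fin d)))ᶜ])
        {y | u ∈ Submodule.span ℝ
          (Set.range fun i => (Submodule.orthogonalProjectionOnto Sᗮ (y i) : EuclideanSpace ℝ (Fin d)))}) :
    1 - ENNReal.ofReal (2 * δ) ≤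
      (Measure.pi fun _ :
          Fin (⌈n / ε + 2 * Real.sqrt (Real.log (1 / δ) * n) / ε
                + 4 * Real.log (1 / δ) / ε⌉₊) => μ)
        {x | u ∈ Submodule.span ℝ
          (Set.range fun i => (Submodule.orthogonalProjectionOnto Sᗮ (x i) : EuclideanSpace ℝ (Fin d)))} :=
  stmt9_general d n ε δ hε hδ μ S hp u hyp
end

section
/- In a finite-horizon MDP, let Q̂_{1:H} be arbitrary functions and let π̂ be the greedy policy π̂_h(x) ∈ argmax_a Q̂_h(x,a). Then for any policy π: E[V_1^π(x_1)] − E[V_1^{π̂}(x_1)] ≤ Σ_{h=1}^H E^π[(T_h[Q̂_{h+1}] − Q̂_h)(x_h, a_h)] − Σ_{h=1}^H E^{π̂}[(T_h[Q̂_{h+1}] − Q̂_h)(x_h, a_h)], where T_h is the Bellman backup operator with rewards r_{1:H}. -/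
open Finset

/-! Finite-horizon MDP with finite state space `X` and finite action space `A`,
time-indexed transition kernels `P h x a : X → ℝ`, rewards `r h : X → A → ℝ`,
initial distribution `ρ`, and deterministic policies `π : ℕ → X → A`.
Layers are indexed `0, ..., H-1`. -/

variable {X A : Type*}

/-- `vmax Q x = max_a Q x a`. -/
noncomputable def vmax [Fintype A] [Nonempty A] (Q : X → A → ℝ) (x : X) : ℝ :=
  Finset.univ.sup' Finset.univ_nonempty (Q x)

/-- Occupancy measure of policy `π` at layer `h` starting from `x₁ ~ ρ`. -/
noncomputable def occ [Fintype X] (P : ℕ → X → A → X → ℝ) (π : ℕ → X → A) (ρ : X → ℝ) :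
    ℕ → X → ℝ
  | 0 => ρ
  | h + 1 => fun x => ∑ x' : X, occ P π ρ h x' * P h x' (π h x') x

/-- `Epi P π ρ h f = E^π[f(x_h, a_h)]` with `x₁ ~ ρ`. -/
noncomputable def Epi [Fintype X] (P : ℕ → X → A → X → ℝ) (π : ℕ → X → A) (ρ : X → ℝ)
    (h : ℕ) (f : X → A → ℝ) : ℝ :=
  ∑ x : X, occ P π ρ h x * f x (π h x)

/-- Bellman backup operator at one layer. -/
noncomputable def bellman [Fintype X] [Fintype A] [Nonempty A]
    (P : X → A → X → ℝ) (r : X → A → ℝ) (Qn : X → A → ℝ) (x : X) (a : A) : ℝ :=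
  r x a + ∑ x' : X, P x a x' * vmax Qn x'


lemma occ_nonneg [Fintype X] (P : ℕ → X → A → X → ℝ) (σ : ℕ → X → A) (ρ : X → ℝ)
    (hρ0 : ∀ x, 0 ≤ ρ x) (hP0 : ∀ h x a x', 0 ≤ P h x a x') :
    ∀ h x, 0 ≤ occ P σ ρ h x := by
  intro h
  induction h with
  | zero => exact hρ0
  | succ h ih =>
    intro x
    exact Finset.sum_nonneg fun x' _ => mul_nonneg (ih x') (hP0 _ _ _ _)

lemma le_vmax [Fintype A] [Nonempty A] (Q : X → A → ℝ) (x : X) (a : A) : Q x a ≤ vmax Q x :=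
  Finset.le_sup' (Q x) (mem_univ a)

lemma swap_lemma [Fintype X] [Fintype A] [Nonempty A]
    (P : ℕ → X → A → X → ℝ) (σ : ℕ → X → A) (ρ : X → ℝ) (h : ℕ) (Qn : X → A → ℝ) :
    ∑ x : X, occ P σ ρ h x * ∑ x' : X, P h x (σ h x) x' * vmax Qn x'
      = ∑ x' : X, occ P σ ρ (h+1) x' * vmax Qn x' := by
  simp only [occ, Finset.sum_mul]
  rw [Finset.sum_comm]
  refine Finset.sum_congr rfl fun x _ => ?_
  rw [Finset.mul_sum]
  refine Finset.sum_congr rfl fun x' _ => by ring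

lemma Epi_key [Fintype X] [Fintype A] [Nonempty A]
    (P : ℕ → X → A → X → ℝ) (σ : ℕ → X → A) (ρ : X → ℝ) (h : ℕ)
    (r : X → A → ℝ) (Qn : X → A → ℝ) (Qh : X → A → ℝ) :
    Epi P σ ρ h (fun x a => bellman (P h) r Qn x a - Qh x a)
      = Epi P σ ρ h r + (∑ x : X, occ P σ ρ (h+1) x * vmax Qn x)
        - ∑ x : X, occ P σ ρ h x * Qh x (σ h x) := by
  have hs := swap_lemma P σ ρ h Qn
  simp only [Epi, bellman, mul_sub, mul_add, Finset.sum_sub_distrib, Finset.sum_add_distrib]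
  rw [hs]

/-- Bellman residual decomposition with a greedy policy. Let `π̂` be greedy
with respect to arbitrary `Q̂_{0:H-1}` (with `Q̂_H ≡ 0`). Then for any policy `π`,
`E[V₁^π(x₁)] − E[V₁^{π̂}(x₁)]
  ≤ ∑_h E^π[(T_h[Q̂_{h+1}] − Q̂_h)(x_h,a_h)] − ∑_h E^{π̂}[(T_h[Q̂_{h+1}] − Q̂_h)(x_h,a_h)]`. -/
theorem stmt15 [Fintype X] [Fintype A] [Nonempty A]
    (H : ℕ) (P : ℕ → X → A → X → ℝ) (r : ℕ → X → A → ℝ)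
    (ρ : X → ℝ) (hρ0 : ∀ x, 0 ≤ ρ x) (hρ1 : ∑ x : X, ρ x = 1)
    (hP0 : ∀ h x a x', 0 ≤ P h x a x') (hP1 : ∀ h x a, ∑ x' : X, P h x a x' = 1)
    (Qhat : ℕ → X → A → ℝ) (hQH : ∀ x a, Qhat H x a = 0)
    (πhat : ℕ → X → A)
    (hgreedy : ∀ h x, Qhat h x (πhat h x) = vmax (Qhat h) x)
    (π : ℕ → X → A) :
    (∑ h ∈ Finset.range H, Epi P π ρ h (r h))
        - (∑ h ∈ Finset.range H, Epi P πhat ρ h (r h))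
      ≤ (∑ h ∈ Finset.range H,
          Epi P π ρ h (fun x a => bellman (P h) (r h) (Qhat (h + 1)) x a - Qhat h x a))
        - (∑ h ∈ Finset.range H,
          Epi P πhat ρ h (fun x a => bellman (P h) (r h) (Qhat (h + 1)) x a - Qhat h x a)) := by
  
  -- S σ h = E^σ[Q̂_h(x_h, a_h)]
  set S : (ℕ → X → A) → ℕ → ℝ :=
    fun σ h => ∑ x : X, occ P σ ρ h x * Qhat h x (σ h x) with hSdef
  have key : ∀ (σ : ℕ → X → A) (h : ℕ),
      Epi P σ ρ h (fun x a => bellman (P h) (r h) (Qhat (h + 1)) x a - Qhat h x a)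
        = Epi P σ ρ h (r h) + (∑ x : X, occ P σ ρ (h+1) x * vmax (Qhat (h+1)) x) - S σ h :=
    fun σ h => Epi_key P σ ρ h (r h) (Qhat (h+1)) (Qhat h)
  have tel : ∀ σ : ℕ → X → A, ∑ h ∈ Finset.range H, (S σ (h+1) - S σ h) = S σ H - S σ 0 :=
    fun σ => Finset.sum_range_sub (S σ) H
  have hSH : ∀ σ : ℕ → X → A, S σ H = 0 := by
    intro σ; simp [hSdef, hQH]
  -- bound for π
  have hπbound : ∀ h : ℕ,
      S π (h+1) ≤ ∑ x : X, occ P π ρ (h+1) x * vmax (Qhat (h+1)) x := by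
    intro h
    exact Finset.sum_le_sum fun x _ =>
      mul_le_mul_of_nonneg_left (le_vmax (Qhat (h+1)) x (π (h+1) x))
        (occ_nonneg P π ρ hρ0 hP0 (h+1) x)
  -- equality for π̂
  have hphat_eq : ∀ h : ℕ,
      (∑ x : X, occ P πhat ρ (h+1) x * vmax (Qhat (h+1)) x) = S πhat (h+1) := by
    intro h
    exact Finset.sum_congr rfl fun x _ => by rw [hgreedy (h+1) x]
  have hS0 : S π 0 ≤ S πhat 0 := by
    refine Finset.sum_le_sum fun x _ => ?_
    show occ P π ρ 0 x * Qhat 0 x (π 0 x) ≤ occ P πhat ρ 0 x * Qhat 0 x (πhat 0 x)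
    show ρ x * Qhat 0 x (π 0 x) ≤ ρ x * Qhat 0 x (πhat 0 x)
    refine mul_le_mul_of_nonneg_left ?_ (hρ0 x)
    rw [hgreedy 0 x]; exact le_vmax (Qhat 0) x (π 0 x)
  have hπres : (∑ h ∈ Finset.range H, Epi P π ρ h (r h)) - S π 0
      ≤ ∑ h ∈ Finset.range H,
          Epi P π ρ h (fun x a => bellman (P h) (r h) (Qhat (h + 1)) x a - Qhat h x a) := by
    calc (∑ h ∈ Finset.range H, Epi P π ρ h (r h)) - S π 0
        = ∑ h ∈ Finset.range H, Epi P π ρ h (r h) + (S π H - S π 0) := by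
          rw [hSH π]; ring
      _ = ∑ h ∈ Finset.range H, (Epi P π ρ h (r h) + (S π (h+1) - S π h)) := by
          rw [Finset.sum_add_distrib, tel π]
      _ ≤ ∑ h ∈ Finset.range H, Epi P π ρ h
            (fun x a => bellman (P h) (r h) (Qhat (h + 1)) x a - Qhat h x a) := by
          refine Finset.sum_le_sum fun h _ => ?_
          rw [key π h]
          have := hπbound h
          linarith
  have hphat_res : (∑ h ∈ Finset.range H, Epi P πhat ρ h (r h)) - S πhat 0
      = ∑ h ∈ Finset.range H,
          Epi P πhat ρ h (fun x a => bellman (P h) (r h) (Qhat (h + 1)) x a - Qhat h x a) := by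
    calc (∑ h ∈ Finset.range H, Epi P πhat ρ h (r h)) - S πhat 0
        = ∑ h ∈ Finset.range H, Epi P πhat ρ h (r h) + (S πhat H - S πhat 0) := by
          rw [hSH πhat]; ring
      _ = ∑ h ∈ Finset.range H, (Epi P πhat ρ h (r h) + (S πhat (h+1) - S πhat h)) := by
          rw [Finset.sum_add_distrib, tel πhat]
      _ = ∑ h ∈ Finset.range H, Epi P πhat ρ h
            (fun x a => bellman (P h) (r h) (Qhat (h + 1)) x a - Qhat h x a) := by
          refine Finset.sum_congr rfl fun h _ => ?_
          rw [key πhat h, hphat_eq h]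
          ring
  linarith
end
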